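/- arXiv:2204.00608 — 3 statements merged into one kernel-verified Lean document; each statement's English description precedes it below -/
import Mathlib

section
/- Let E^2_{pq} ⇒ E_{p+q} be a convergent first-quadrant spectral sequence with the property (R1): whenever E^2_{0q} = 0 for some q > 0, then E^2_{pq} = 0 for all p > 0. Then any two of the following conditions imply the third: (i) E^2_{pq} = 0 for all p and all q > 0; (ii) E^2_{p0} = 0 for all p > 0; (iii) E_n = 0 for all n > 0. -/
open CategoryTheory CategoryTheory.Limits

universe v u

/-- A convergent first-quadrant homological spectral sequence in an abelian category:
pages `E r p q` (the index `r` denotes page `r + 2`), differentials of bidegree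
`(-(r+2), r+1)`, each next page computed as the homology of the previous one, vanishing
outside the first quadrant, stable values `Einf`, and a finite exhaustive filtration of
each abutment object whose subquotients are the stable values. -/
structure ConvergentFirstQuadrantSS (C : Type u) [Category.{v} C] [Abelian C] where
  /-- the pages: `E r p q` is `E^{r+2}_{p,q}` -/
  E : ℕ → ℤ → ℤ → C
  /-- the differentials, of bidegree `(-(r+2), r+1)` on page `r+2` -/
  d : ∀ (r : ℕ) (p q : ℤ), E r p q ⟶ E r (p - ((r : ℤ) + 2)) (q + ((r : ℤ) + 1))
  /-- two consecutive differentials compose to zero -/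
  d_comp_d : ∀ (r : ℕ) (p q : ℤ),
    (d r (p + ((r : ℤ) + 2)) (q - ((r : ℤ) + 1)) ≫
      eqToHom (congrArg₂ (E r) (by omega) (by omega))) ≫ d r p q = 0
  /-- each page is the homology of the previous one -/
  nextPageIso : ∀ (r : ℕ) (p q : ℤ),
    E (r + 1) p q ≅ (ShortComplex.mk _ _ (d_comp_d r p q)).homology
  /-- first-quadrant condition -/
  firstQuadrant : ∀ (r : ℕ) (p q : ℤ), p < 0 ∨ q < 0 → IsZero (E r p q)
  /-- the stable value at position `(p,q)` -/
  Einf : ℤ → ℤ → C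
  /-- the pages stabilize to `Einf` -/
  stab : ∀ p q : ℤ, ∃ r₀ : ℕ, ∀ r, r₀ ≤ r → Nonempty (E r p q ≅ Einf p q)
  /-- the abutment objects -/
  abutment : ℤ → C
  /-- the filtration `filt n p` of the abutment `abutment n` -/
  filt : ℤ → ℤ → C
  /-- the inclusions of the filtration steps -/
  filtMap : ∀ n p : ℤ, filt n (p - 1) ⟶ filt n p
  filtMono : ∀ n p : ℤ, Mono (filtMap n p)
  /-- the filtration starts at `0` -/
  filt_neg : ∀ n p : ℤ, p < 0 → IsZero (filt n p)
  /-- the filtration is exhaustive -/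
  filt_abutment : ∀ n p : ℤ, n ≤ p → Nonempty (filt n p ≅ abutment n)
  /-- the subquotients of the filtration are the stable values -/
  filt_quot : ∀ n p : ℤ, Nonempty (cokernel (filtMap n p) ≅ Einf p (n - p))


namespace ConvergentFirstQuadrantSS

variable {C : Type u} [Category.{v} C] [Abelian C] (S : ConvergentFirstQuadrantSS C)

/-- Zero at one page implies zero at the next page. -/
lemma isZero_next {r : ℕ} {p q : ℤ} (h : IsZero (S.E r p q)) : IsZero (S.E (r + 1) p q) := by
  set T := ShortComplex.mk _ _ (S.d_comp_d r p q)
  have hc : IsZero T.cycles := IsZero.of_mono T.iCycles h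
  have hh : IsZero T.homology := IsZero.of_epi T.homologyπ hc
  exact hh.of_iso (S.nextPageIso r p q)

lemma isZero_of_isZero_two {p q : ℤ} (h : IsZero (S.E 0 p q)) (r : ℕ) : IsZero (S.E r p q) := by
  induction r with
  | zero => exact h
  | succ n ih => exact S.isZero_next ih

lemma isZero_Einf_of_isZero_two {p q : ℤ} (h : IsZero (S.E 0 p q)) : IsZero (S.Einf p q) := by
  obtain ⟨r₀, hr⟩ := S.stab p q
  obtain ⟨e⟩ := hr r₀ le_rfl
  exact (S.isZero_of_isZero_two h r₀).of_iso e.symm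

/-- If the incoming source and outgoing target vanish, the next page agrees with this one. -/
lemma next_iso {r : ℕ} {p q : ℤ}
    (h1 : IsZero (S.E r (p + ((r : ℤ) + 2)) (q - ((r : ℤ) + 1))))
    (h3 : IsZero (S.E r (p - ((r : ℤ) + 2)) (q + ((r : ℤ) + 1)))) :
    Nonempty (S.E (r + 1) p q ≅ S.E r p q) := by
  set T := ShortComplex.mk _ _ (S.d_comp_d r p q)
  have hf : T.f = 0 := h1.eq_of_src _ _
  have hg : T.g = 0 := h3.eq_of_tgt _ _
  exact ⟨S.nextPageIso r p q ≪≫ (ShortComplex.HomologyData.ofZeros T hf hg).left.homologyIso⟩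

/-- If at every page the incoming source and outgoing target vanish, then the `E²`-page
at `(p,q)` is zero as soon as the stable value is. -/
lemma isZero_two_of_isZero_Einf {p q : ℤ}
    (h : ∀ r : ℕ, IsZero (S.E r (p + ((r : ℤ) + 2)) (q - ((r : ℤ) + 1))) ∧
      IsZero (S.E r (p - ((r : ℤ) + 2)) (q + ((r : ℤ) + 1))))
    (hinf : IsZero (S.Einf p q)) : IsZero (S.E 0 p q) := by
  have key : ∀ r : ℕ, Nonempty (S.E r p q ≅ S.E 0 p q) := by
    intro r
    induction r with
    | zero => exact ⟨Iso.refl _⟩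
    | succ n ih =>
      obtain ⟨e⟩ := ih
      obtain ⟨e'⟩ := S.next_iso (h n).1 (h n).2
      exact ⟨e' ≪≫ e⟩
  obtain ⟨r₀, hr⟩ := S.stab p q
  obtain ⟨e⟩ := hr r₀ le_rfl
  obtain ⟨e'⟩ := key r₀
  exact hinf.of_iso (e'.symm ≪≫ e)

lemma isZero_abutment_of_Einf {n : ℤ} (h : ∀ p : ℤ, IsZero (S.Einf p (n - p))) :
    IsZero (S.abutment n) := by
  have key : ∀ k : ℕ, IsZero (S.filt n (-1 + (k : ℤ))) := by
    intro k
    induction k with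
    | zero => exact S.filt_neg n _ (by norm_num)
    | succ m ih =>
      set p : ℤ := -1 + ((m : ℤ) + 1) with hpdef
      have hcoker : IsZero (cokernel (S.filtMap n p)) := by
        obtain ⟨e⟩ := S.filt_quot n p
        exact (h p).of_iso e
      have := S.filtMono n p
      have hepi : Epi (S.filtMap n p) := Preadditive.epi_of_isZero_cokernel _ hcoker
      have hsrc : IsZero (S.filt n (p - 1)) := by
        have hm : p - 1 = -1 + (m : ℤ) := by rw [hpdef]; ring
        rw [hm]; exact ih
      have hz : IsZero (S.filt n p) := IsZero.of_epi (S.filtMap n p) hsrc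
      have hc : (-1 + ((m + 1 : ℕ) : ℤ)) = p := by rw [hpdef]; push_cast; ring
      rw [hc]; exact hz
  have hfilt : IsZero (S.filt n (max n 0)) := by
    have hc : max n 0 = -1 + (((max n 0 + 1).toNat : ℕ) : ℤ) := by omega
    rw [hc]; exact key _
  obtain ⟨e⟩ := S.filt_abutment n (max n 0) (le_max_left _ _)
  exact hfilt.of_iso e.symm

lemma isZero_Einf_of_abutment {n : ℤ} (h : IsZero (S.abutment n)) (p q : ℤ) (hpq : p + q = n) :
    IsZero (S.Einf p q) := by
  have key : ∀ k : ℕ, ∀ p : ℤ, n ≤ p + k → IsZero (S.filt n p) := by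
    intro k
    induction k with
    | zero =>
      intro p hp
      obtain ⟨e⟩ := S.filt_abutment n p (by omega)
      exact h.of_iso e
    | succ m ih =>
      intro p hp
      have htgt : IsZero (S.filt n (p + 1)) := ih (p + 1) (by push_cast at hp ⊢; omega)
      have := S.filtMono n (p + 1)
      have hsrc : IsZero (S.filt n (p + 1 - 1)) := IsZero.of_mono (S.filtMap n (p + 1)) htgt
      have heq : p + 1 - 1 = p := by ring
      rwa [heq] at hsrc
  have hfilt : ∀ p : ℤ, IsZero (S.filt n p) := fun p =>
    key (n - p).toNat p (by omega)
  have hcoker : IsZero (cokernel (S.filtMap n p)) :=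
    IsZero.of_epi (cokernel.π (S.filtMap n p)) (hfilt p)
  obtain ⟨e⟩ := S.filt_quot n p
  have : IsZero (S.Einf p (n - p)) := hcoker.of_iso e.symm
  have hq : q = n - p := by omega
  rwa [hq]

end ConvergentFirstQuadrantSS

/-- Let `E²_{pq} ⇒ E_{p+q}` be a convergent first-quadrant spectral
sequence with property (R1): whenever `E²_{0q} = 0` for some `q > 0`, then `E²_{pq} = 0`
for all `p > 0`.  Then any two of the conditions (i) `E²_{pq} = 0` for all `p` and all
`q > 0`, (ii) `E²_{p0} = 0` for all `p > 0`, (iii) `E_n = 0` for all `n > 0` imply the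
third. -/
theorem two_of_three_vanishing {C : Type u} [Category.{v} C] [Abelian C]
    (S : ConvergentFirstQuadrantSS C)
    (hR1 : ∀ q : ℤ, 0 < q → IsZero (S.E 0 0 q) → ∀ p : ℤ, 0 < p → IsZero (S.E 0 p q)) :
    ((∀ (p q : ℤ), 0 < q → IsZero (S.E 0 p q)) →
      (∀ p : ℤ, 0 < p → IsZero (S.E 0 p 0)) →
      (∀ n : ℤ, 0 < n → IsZero (S.abutment n))) ∧
    ((∀ (p q : ℤ), 0 < q → IsZero (S.E 0 p q)) →
      (∀ n : ℤ, 0 < n → IsZero (S.abutment n)) →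
      (∀ p : ℤ, 0 < p → IsZero (S.E 0 p 0))) ∧
    ((∀ p : ℤ, 0 < p → IsZero (S.E 0 p 0)) →
      (∀ n : ℤ, 0 < n → IsZero (S.abutment n)) →
      (∀ (p q : ℤ), 0 < q → IsZero (S.E 0 p q))) := by
  refine ⟨?_, ?_, ?_⟩
  · -- (i) ∧ (ii) → (iii)
    intro hi hii n hn
    apply S.isZero_abutment_of_Einf
    intro p
    apply S.isZero_Einf_of_isZero_two
    rcases lt_trichotomy (n - p) 0 with h | h | h
    · exact S.firstQuadrant _ _ _ (Or.inr h)
    · rw [h]; exact hii p (by omega)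
    · exact hi p _ h
  · -- (i) ∧ (iii) → (ii)
    intro hi hiii p hp
    apply S.isZero_two_of_isZero_Einf
    · intro r
      constructor
      · exact S.firstQuadrant _ _ _ (Or.inr (by omega))
      · exact S.isZero_of_isZero_two (hi _ _ (by omega)) r
    · exact S.isZero_Einf_of_abutment (hiii p hp) p 0 (by omega)
  · -- (ii) ∧ (iii) → (i)
    intro hii hiii
    have edge : ∀ q : ℤ, 0 < q → IsZero (S.E 0 0 q) := by
      have main : ∀ k : ℕ, ∀ q : ℤ, 0 < q → q ≤ k → IsZero (S.E 0 0 q) := by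
        intro k
        induction k with
        | zero => intro q h1 h2; omega
        | succ m ih =>
          intro q hq hqk
          apply S.isZero_two_of_isZero_Einf
          · intro r
            constructor
            · rcases lt_trichotomy (q - ((r : ℤ) + 1)) 0 with h | h | h
              · exact S.firstQuadrant _ _ _ (Or.inr h)
              · apply S.isZero_of_isZero_two
                rw [h]
                exact hii _ (by omega)
              · apply S.isZero_of_isZero_two
                have h0 : IsZero (S.E 0 0 (q - ((r : ℤ) + 1))) :=
                  ih _ h (by push_cast at hqk ⊢; omega)
                exact hR1 _ h h0 _ (by omega)
            · exact S.firstQuadrant _ _ _ (Or.inl (by omega))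
          · have := S.isZero_Einf_of_abutment (hiii q hq) 0 q (by omega)
            exact this
      intro q hq
      exact main q.toNat q hq (by omega)
    intro p q hq
    rcases lt_trichotomy p 0 with h | h | h
    · exact S.firstQuadrant _ _ _ (Or.inl h)
    · rw [h]; exact edge q hq
    · exact hR1 q hq (edge q hq) p h
end

section
/- Let R be a Noetherian local complete ring, a a proper ideal, Λ a Noetherian R-algebra, I = aΛ, and n > 0 an integer such that Tor_1^R(Λ, R/a^n) = 0. Then the map ψ_n: Λ ⊗_R a^n/a^{n+1} → I^n/I^{n+1} sending a ⊗ (b + a^{n+1}) to ab + I^{n+1} is an isomorphism of Λ/I-bimodules. -/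
/-!
Splicing a projective resolution of `aⁿ` onto `0 → aⁿ → R → R/aⁿ → 0` computes
`Tor₁^R(Λ, R/aⁿ)` as the kernel of `Λ ⊗_R aⁿ → Λ`, so the hypothesis makes multiplication an
isomorphism `Λ ⊗_R aⁿ ≅ aⁿΛ = Iⁿ`. By right exactness, `Λ ⊗_R aⁿ/aⁿ⁺¹` is the quotient of
`Λ ⊗_R aⁿ` by the image of `Λ ⊗_R aⁿ⁺¹`, and that isomorphism carries this image onto `Iⁿ⁺¹`.
-/

open CategoryTheory CategoryTheory.Limits MonoidalCategory TensorProduct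

universe u

namespace CategoryTheory.ProjectiveResolution

variable {C : Type*} [Category C] [Abelian C]

/-- `P.π.f 0`, with target `Z` itself rather than the defeq but unwieldy
`((single₀ C).obj Z).X 0`. -/
noncomputable def augmentation {Z : C} (P : ProjectiveResolution Z) : P.complex.X 0 ⟶ Z :=
  (ChainComplex.toSingle₀Equiv _ _ P.π).1

lemma d_comp_augmentation {Z : C} (P : ProjectiveResolution Z) :
    P.complex.d 1 0 ≫ P.augmentation = 0 :=
  (ChainComplex.toSingle₀Equiv _ _ P.π).2

instance {Z : C} (P : ProjectiveResolution Z) : Epi P.augmentation :=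
  inferInstanceAs (Epi (P.π.f 0))

noncomputable def ofShortExact {S : ShortComplex C} (hS : S.ShortExact) [Projective S.X₂]
    (Q : ProjectiveResolution S.X₁) : ProjectiveResolution S.X₃ where
  complex := Q.complex.augment (Q.augmentation ≫ S.f) (by
    rw [← Category.assoc, Q.d_comp_augmentation, zero_comp])
  projective
    | 0 => ‹Projective S.X₂›
    | n + 1 => Q.projective n
  π := (ChainComplex.toSingle₀Equiv _ _).symm ⟨S.g,
    show (Q.augmentation ≫ S.f) ≫ S.g = 0 by rw [Category.assoc, S.zero, comp_zero]⟩
  quasiIso := ⟨fun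
    | 0 => by
      rw [ChainComplex.quasiIsoAt₀_iff, ShortComplex.quasiIso_iff_of_zeros']
      · let φ : ShortComplex.mk (Q.augmentation ≫ S.f) S.g
            (by rw [Category.assoc, S.zero, comp_zero]) ⟶ S :=
          { τ₁ := Q.augmentation, τ₂ := 𝟙 _, τ₃ := 𝟙 _ }
        have : Epi φ.τ₁ := inferInstanceAs (Epi Q.augmentation)
        refine (ShortComplex.exact_and_epi_g_iff_of_iso ?_).2
          ⟨(ShortComplex.exact_iff_of_epi_of_isIso_of_mono φ).2 hS.exact, hS.epi_g⟩
        refine ShortComplex.isoMk (Iso.refl _) (Iso.refl _) (Iso.refl _)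
          ((Category.id_comp _).trans (Category.comp_id _).symm) ?_
        refine (Category.id_comp _).trans (Eq.trans ?_ (Category.comp_id _).symm)
        exact (ChainComplex.toSingle₀Equiv_symm_apply_f_zero
          (C := Q.complex.augment (Q.augmentation ≫ S.f) _) (X := S.X₃) S.g _).symm
      all_goals rfl
    | 1 => by
      rw [quasiIsoAt_iff_exactAt' _ _ (ChainComplex.exactAt_succ_single_obj _ _),
        HomologicalComplex.exactAt_iff' _ 2 1 0 (by simp) (by simp)]
      let φ : ShortComplex.mk _ _ Q.d_comp_augmentation ⟶
          ShortComplex.mk (Q.complex.d 1 0) (Q.augmentation ≫ S.f)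
            (by rw [← Category.assoc, Q.d_comp_augmentation, zero_comp]) :=
        { τ₁ := 𝟙 _, τ₂ := 𝟙 _, τ₃ := S.f }
      have : Mono φ.τ₃ := hS.mono_f
      exact (ShortComplex.exact_iff_of_epi_of_isIso_of_mono φ).1 Q.exact₀
    | n + 2 => by
      rw [quasiIsoAt_iff_exactAt' _ _ (ChainComplex.exactAt_succ_single_obj _ _),
        HomologicalComplex.exactAt_iff' _ (n + 3) (n + 2) (n + 1) (by simp) (by simp)]
      exact Q.exact_succ n⟩

end CategoryTheory.ProjectiveResolution

namespace CategoryTheory.Functor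

variable {C D : Type*} [Category C] [Abelian C] [HasProjectiveResolutions C]
  [Category D] [Abelian D]

lemma mono_map_of_isZero_leftDerived_one (F : C ⥤ D) [F.Additive] [F.PreservesEpimorphisms]
    {S : ShortComplex C} (hS : S.ShortExact) [Projective S.X₂]
    (h : IsZero ((F.leftDerived 1).obj S.X₃)) : Mono (F.map S.f) := by
  obtain ⟨Q⟩ := HasProjectiveResolution.out (Z := S.X₁)
  let P := ProjectiveResolution.ofShortExact hS Q
  have hP : ((F.mapHomologicalComplex _).obj P.complex).ExactAt 1 :=
    (HomologicalComplex.exactAt_iff_isZero_homology _ _).2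
      (h.of_iso (P.isoLeftDerivedObj F 1).symm)
  rw [HomologicalComplex.exactAt_iff' _ 2 1 0 (by simp) (by simp)] at hP
  -- Lift `x` to `F Q₀`, then by exactness of `F Q₁ ⟶ F Q₀ ⟶ F X₂` to `F Q₁`, where it dies.
  refine Preadditive.mono_of_cancel_zero _ fun {A} x hx => ?_
  obtain ⟨A', π, _, y, hy⟩ := surjective_up_to_refinements_of_epi (F.map Q.augmentation) x
  obtain ⟨A'', π', _, z, hz⟩ : ∃ (A'' : D) (π' : A'' ⟶ A') (_ : Epi π')
      (z : A'' ⟶ F.obj (Q.complex.X 1)), π' ≫ y = z ≫ F.map (Q.complex.d 1 0) :=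
    hP.exact_up_to_refinements y (by
      change y ≫ F.map (Q.augmentation ≫ S.f) = 0
      rw [F.map_comp, ← Category.assoc, ← hy, Category.assoc, hx, comp_zero])
  rw [← cancel_epi (π' ≫ π), comp_zero, Category.assoc, hy, ← Category.assoc, hz,
    Category.assoc, ← F.map_comp, Q.d_comp_augmentation, F.map_zero, comp_zero]

end CategoryTheory.Functor

instance ModuleCat.tensoringLeft_preservesEpimorphisms {R : Type*} [CommRing R]
    (L : ModuleCat R) :
    ((tensoringLeft (ModuleCat R)).obj L).PreservesEpimorphisms :=
  ⟨fun f hf => (ModuleCat.epi_iff_surjective _).2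
    (LinearMap.lTensor_surjective L ((ModuleCat.epi_iff_surjective f).1 hf))⟩

lemma Submodule.lTensor_subtype_injective_of_isZero_tor {R : Type u} [CommRing R]
    (L : Type u) [AddCommGroup L] [Module R L] {M : Type u} [AddCommGroup M] [Module R M]
    [Module.Projective R M] (N : Submodule R M)
    (htor : IsZero (((Tor (ModuleCat.{u} R) 1).obj (ModuleCat.of R L)).obj
      (ModuleCat.of R (M ⧸ N)))) :
    Function.Injective (N.subtype.lTensor L) := by
  have hS := ModuleCat.shortComplex_shortExact
    (ModuleCat.shortComplexOfCompEqZero N.subtype N.mkQ (by ext; simp))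
    (LinearMap.exact_subtype_mkQ N) N.injective_subtype N.mkQ_surjective
  have : Projective (ModuleCat.of R M) := (IsProjective.iff_projective M).mp inferInstance
  exact (ModuleCat.mono_iff_injective _).1 (Functor.mono_map_of_isZero_leftDerived_one _ hS htor)

namespace TensorProduct.AlgebraTensorModule

variable {R : Type*} (A : Type*) [CommRing R] [Ring A] [Algebra R A]
variable (M : Type*) [AddCommGroup M] [Module R M] [Module A M] [IsScalarTower R A M]
variable {N : Type*} [AddCommGroup N] [Module R N]

/-- `TensorProduct.tensorQuotientEquiv` is linear over `A` also when `A` is not commutative. -/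
noncomputable def tensorQuotientEquiv' (n : Submodule R N) :
    M ⊗[R] (N ⧸ n) ≃ₗ[A] (M ⊗[R] N) ⧸ LinearMap.range (lTensor A M n.subtype) where
  __ := TensorProduct.tensorQuotientEquiv M n
  map_smul' m x := by
    simp only [AddHom.toFun_eq_coe, LinearMap.coe_toAddHom, LinearEquiv.coe_coe]
    induction x with
    | zero => exact (smul_zero m).symm
    | add x y hx hy => rw [smul_add, map_add, map_add, hx, hy]; exact (smul_add m _ _).symm
    | tmul x y =>
      obtain ⟨y, rfl⟩ := Submodule.Quotient.mk_surjective _ y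
      rfl

end TensorProduct.AlgebraTensorModule

theorem LinearMap.range_rid_comp_lTensor {R : Type*} (A : Type*) [CommRing R] [Ring A]
    [Algebra R A] {M : Type*} [AddCommGroup M] [Module R M] (f : M →ₗ[R] R) :
    range ((AlgebraTensorModule.rid R A A).toLinearMap ∘ₗ AlgebraTensorModule.lTensor A A f) =
      Ideal.map (algebraMap R A) (range f) := by
  apply le_antisymm
  · rintro _ ⟨x, rfl⟩
    induction x with
    | zero => simp
    | add x y hx hy => rw [map_add]; exact add_mem hx hy
    | tmul l m =>
      simp only [coe_comp, LinearEquiv.coe_coe, Function.comp_apply,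
        AlgebraTensorModule.coe_lTensor, lTensor_tmul, AlgebraTensorModule.rid_tmul,
        Algebra.smul_def, Algebra.commutes]
      exact Ideal.mul_mem_left _ _ (Ideal.mem_map_of_mem _ (mem_range_self f m))
  · rw [Ideal.map_le_iff_le_comap]
    rintro _ ⟨m, rfl⟩
    exact mem_range.2 ⟨1 ⊗ₜ m, by simp [Algebra.smul_def]⟩

namespace Ideal

variable {R : Type*} (A : Type*) [CommRing R] [Ring A] [Algebra R A] {J : Ideal R}

noncomputable def tensorEquivMap (hJ : Function.Injective (J.subtype.lTensor A)) :
    A ⊗[R] J ≃ₗ[A] J.map (algebraMap R A) :=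
  (LinearEquiv.ofInjective ((AlgebraTensorModule.rid R A A).toLinearMap ∘ₗ
      AlgebraTensorModule.lTensor A A J.subtype)
      ((AlgebraTensorModule.rid R A A).injective.comp hJ)).trans
    (LinearEquiv.ofEq _ _ (by rw [LinearMap.range_rid_comp_lTensor, J.range_subtype]))

lemma subtype_comp_tensorEquivMap (hJ : Function.Injective (J.subtype.lTensor A)) :
    (J.map (algebraMap R A)).subtype ∘ₗ (tensorEquivMap A hJ).toLinearMap =
      (AlgebraTensorModule.rid R A A).toLinearMap ∘ₗ AlgebraTensorModule.lTensor A A J.subtype :=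
  rfl

noncomputable def tensorQuotientEquivMapQuotient (hJ : Function.Injective (J.subtype.lTensor A))
    (N : Submodule R J) :
    A ⊗[R] (J ⧸ N) ≃ₗ[A] J.map (algebraMap R A) ⧸
      Submodule.comap (J.map (algebraMap R A)).subtype
        (Ideal.map (algebraMap R A) (N.map J.subtype)) :=
  (AlgebraTensorModule.tensorQuotientEquiv' A A N).trans
    (Submodule.Quotient.equiv _ _ (tensorEquivMap A hJ) (by
      apply Submodule.map_injective_of_injective (J.map (algebraMap R A)).injective_subtype
      rw [Submodule.map_comap_subtype,
        inf_of_le_right (Ideal.map_mono (Submodule.map_subtype_le J N)),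
        ← LinearMap.range_comp, ← LinearMap.range_comp, ← LinearMap.comp_assoc,
        subtype_comp_tensorEquivMap, LinearMap.comp_assoc, ← AlgebraTensorModule.lTensor_comp,
        LinearMap.range_rid_comp_lTensor, LinearMap.range_comp, Submodule.range_subtype]))

end Ideal

/-- Let `R` be a complete local Noetherian ring, `a` a proper ideal,
`Λ` a Noetherian `R`-algebra, `I = aΛ`, and `n > 0` an integer such that
`Tor_1^R(Λ, R/a^n) = 0`.  Then the map
`ψ_n : Λ ⊗_R a^n/a^{n+1} → I^n/I^{n+1}`, `l ⊗ (b + a^{n+1}) ↦ lb + I^{n+1}`, is an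
isomorphism (here formalised as a `Λ`-linear equivalence satisfying the defining formula
on pure tensors, which determines compatibility with both bimodule structures). -/
theorem conormal_base_change_iso
    {R : Type u} [CommRing R]
    (a : Ideal R)
    {Λ : Type u} [Ring Λ] [Algebra R Λ] (n : ℕ)
    (htor : CategoryTheory.Limits.IsZero (((CategoryTheory.Tor (ModuleCat.{u} R) 1).obj
      (ModuleCat.of R Λ)).obj (ModuleCat.of R (R ⧸ (a ^ n))))) :
    ∃ ψ : (Λ ⊗[R] ((↥(a ^ n)) ⧸ (a • ⊤ : Submodule R ↥(a ^ n)))) ≃ₗ[Λ]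
        ((↥(Ideal.map (algebraMap R Λ) (a ^ n))) ⧸
          (Submodule.comap (Ideal.map (algebraMap R Λ) (a ^ n)).subtype
            (Ideal.map (algebraMap R Λ) (a ^ (n + 1))))),
      ∀ (l : Λ) (b : ↥(a ^ n)),
        ψ (l ⊗ₜ[R] Submodule.Quotient.mk b) =
          Submodule.Quotient.mk
            ⟨(b : R) • l, by
              have hb : algebraMap R Λ (b : R) ∈ Ideal.map (algebraMap R Λ) (a ^ n) :=
                Ideal.mem_map_of_mem _ b.2
              rw [Algebra.smul_def, Algebra.commutes]
              simpa [smul_eq_mul] using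
                Submodule.smul_mem (Ideal.map (algebraMap R Λ) (a ^ n)) l hb⟩ := by
  have hinj := Submodule.lTensor_subtype_injective_of_isZero_tor Λ (a ^ n) htor
  have hN : (a • ⊤ : Submodule R ↥(a ^ n)).map (a ^ n).subtype = a ^ (n + 1) := by
    rw [Submodule.map_smul'', Submodule.map_top, Submodule.range_subtype, Ideal.smul_eq_mul,
      ← pow_succ']
  rw [← hN]
  exact ⟨Ideal.tensorQuotientEquivMapQuotient Λ hinj (a • ⊤), fun l b => rfl⟩
end

section
/- Let A be a semiperfect ring, A → B a surjective ring homomorphism, and e ∈ B an idempotent. Then there exists an idempotent ε ∈ A lifting e, i.e. mapping to e under the surjection. Consequently, if F: C → D is an additive functor between idempotent-complete additive categories which is full on an object L with semiperfect endomorphism ring and reflects zero objects, then every direct summand of F(L) is isomorphic to F(X) for some direct summand X of L. -/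
open CategoryTheory

universe v₁ v₂ u₁ u₂ u

/-- An element `y` is an inverse of `x` inside the corner ring `eAe`. -/
def IsCornerUnit {A : Type u} [Ring A] (e x : A) : Prop :=
  ∃ y, e * y * e = y ∧ x * y = e ∧ y * x = e

/-- An idempotent `e` is local if the corner ring `eAe` (with unit `e`) is a local ring. -/
def IsLocalIdempotent {A : Type u} [Ring A] (e : A) : Prop :=
  e ≠ 0 ∧ ∀ x, e * x * e = x → (IsCornerUnit e x ∨ IsCornerUnit e (e - x))

/-- A ring is semiperfect if `1` decomposes as a finite sum of mutually orthogonal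
idempotents `e i` such that each corner ring `e i * A * e i` is local. -/
def IsSemiperfectRing (A : Type u) [Ring A] : Prop :=
  ∃ (n : ℕ) (e : Fin n → A),
    (∀ i, IsIdempotentElem (e i)) ∧
    (∀ i j, i ≠ j → e i * e j = 0) ∧
    (∑ i, e i) = 1 ∧
    (∀ i, IsLocalIdempotent (e i))

namespace SPLift
section Corner
variable {R : Type u₁} [Ring R]

theorem corner_mul_left {G x : R} (hG : G * G = G) (hx : G * x * G = x) : G * x = x := by
  conv_lhs => rw [← hx]
  rw [← mul_assoc, ← mul_assoc, hG]
  exact hx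

theorem corner_mul_right {G x : R} (hG : G * G = G) (hx : G * x * G = x) : x * G = x := by
  conv_lhs => rw [← hx]
  rw [mul_assoc, mul_assoc, hG, ← mul_assoc]
  exact hx

def Corner (G : R) : Type u₁ := {x : R // G * x * G = x}

namespace Corner
variable {G : R}

instance : Zero (Corner G) := ⟨⟨0, by simp⟩⟩
instance : Add (Corner G) := ⟨fun x y => ⟨x.1 + y.1, by rw [mul_add, add_mul, x.2, y.2]⟩⟩
instance : Neg (Corner G) := ⟨fun x => ⟨-x.1, by rw [mul_neg, neg_mul, x.2]⟩⟩
instance : Sub (Corner G) := ⟨fun x y => ⟨x.1 - y.1, by rw [mul_sub, sub_mul, x.2, y.2]⟩⟩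
instance : SMul ℕ (Corner G) :=
  ⟨fun n x => ⟨n • x.1, by rw [mul_smul_comm, smul_mul_assoc, x.2]⟩⟩
instance : SMul ℤ (Corner G) :=
  ⟨fun n x => ⟨n • x.1, by rw [mul_smul_comm, smul_mul_assoc, x.2]⟩⟩

instance : AddCommGroup (Corner G) :=
  Function.Injective.addCommGroup (fun x : Corner G => x.1) Subtype.val_injective
    rfl (fun _ _ => rfl) (fun _ => rfl) (fun _ _ => rfl) (fun _ _ => rfl) (fun _ _ => rfl)

def mul (hG : G * G = G) (x y : Corner G) : Corner G :=
  ⟨x.1 * y.1, by rw [← mul_assoc, corner_mul_left hG x.2, mul_assoc, corner_mul_right hG y.2]⟩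

def one (hG : G * G = G) : Corner G := ⟨G, by rw [hG, hG]⟩

def ring (hG : G * G = G) : Ring (Corner G) :=
  { (inferInstance : AddCommGroup (Corner G)) with
    mul := mul hG
    one := one hG
    mul_assoc := fun x y z => Subtype.ext (mul_assoc x.1 y.1 z.1)
    one_mul := fun x => Subtype.ext (corner_mul_left hG x.2)
    mul_one := fun x => Subtype.ext (corner_mul_right hG x.2)
    left_distrib := fun x y z => Subtype.ext (mul_add x.1 y.1 z.1)
    right_distrib := fun x y z => Subtype.ext (add_mul x.1 y.1 z.1)
    zero_mul := fun x => Subtype.ext (zero_mul x.1)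
    mul_zero := fun x => Subtype.ext (mul_zero x.1) }

def valHom : Corner G →+ R :=
  { toFun := Subtype.val, map_zero' := rfl, map_add' := fun _ _ => rfl }

end Corner
end Corner

section Conj
variable {R : Type u₁} [Ring R]

theorem conj_mul_conj {w w' : R} (hw'w : w' * w = 1) (x y : R) :
    (w * x * w') * (w * y * w') = w * (x * y) * w' := by
  have cancel : ∀ t, w' * (w * t) = t := fun t => by rw [← mul_assoc, hw'w, one_mul]
  simp only [mul_assoc, cancel]

theorem conj_eq_of {w w' : R} (hww' : w * w' = 1) (x : R) : w * (w' * x * w) * w' = x := by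
  have cancel : ∀ t, w * (w' * t) = t := fun t => by rw [← mul_assoc, hww', one_mul]
  calc w * (w' * x * w) * w' = w * (w' * (x * (w * w'))) := by simp only [mul_assoc]
    _ = x := by rw [cancel, hww', mul_one]

theorem unconj_conj {w w' : R} (hw'w : w' * w = 1) (x : R) : w' * (w * x * w') * w = x := by
  have cancel : ∀ t, w' * (w * t) = t := fun t => by rw [← mul_assoc, hw'w, one_mul]
  calc w' * (w * x * w') * w = w' * (w * (x * (w' * w))) := by simp only [mul_assoc]
    _ = x := by rw [cancel, hw'w, mul_one]

theorem conj_cornerUnit {w w' : R} (hw'w : w' * w = 1) {e x : R} (h : IsCornerUnit e x) :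
    IsCornerUnit (w * e * w') (w * x * w') := by
  obtain ⟨y, hy, hxy, hyx⟩ := h
  exact ⟨w * y * w',
    by rw [conj_mul_conj hw'w, conj_mul_conj hw'w, hy],
    by rw [conj_mul_conj hw'w, hxy],
    by rw [conj_mul_conj hw'w, hyx]⟩

theorem conj_local {w w' : R} (hww' : w * w' = 1) (hw'w : w' * w = 1) {e : R}
    (h : IsLocalIdempotent e) : IsLocalIdempotent (w * e * w') := by
  constructor
  · intro h0
    apply h.1
    have := congrArg (fun t => w' * t * w) h0
    simp only [unconj_conj hw'w] at this
    simpa using this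
  · intro x hx
    have hxrec : w * (w' * x * w) * w' = x := conj_eq_of hww' x
    have hx₀ : e * (w' * x * w) * e = w' * x * w := by
      conv_lhs => rw [← unconj_conj hw'w e]
      have cancel : ∀ t, w' * (w * t) = t := fun t => by rw [← mul_assoc, hw'w, one_mul]
      calc (w' * (w * e * w') * w) * (w' * x * w) * (w' * (w * e * w') * w)
          = w' * ((w * e * w') * x * (w * e * w')) * w := by simp only [mul_assoc, cancel]
        _ = w' * x * w := by rw [hx]
    rcases h.2 _ hx₀ with hcu | hcu
    · left
      have := conj_cornerUnit hw'w hcu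
      rwa [hxrec] at this
    · right
      have := conj_cornerUnit hw'w hcu
      rwa [mul_sub, sub_mul, hxrec] at this
end Conj

theorem local_corner_descent {R : Type u₁} [Ring R] {G : R} (hG : G * G = G) {η : R}
    (hη : G * η * G = η) (h : IsLocalIdempotent η) :
    @IsLocalIdempotent (Corner G) (Corner.ring hG) (⟨η, hη⟩ : Corner G) := by
  letI := Corner.ring hG
  constructor
  · intro h0
    exact h.1 (congrArg Subtype.val h0)
  · intro x hx
    have hx' : η * x.1 * η = x.1 := congrArg Subtype.val hx
    have hGη : G * η = η := corner_mul_left hG hη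
    have hηG : η * G = η := corner_mul_right hG hη
    have hcor : ∀ y : R, η * y * η = y → G * y * G = y := by
      intro y hy
      rw [← hy]
      simp only [← mul_assoc]
      rw [hGη, mul_assoc (η * y) η G, hηG]
    rcases h.2 x.1 hx' with ⟨y, hy, h1, h2⟩ | ⟨y, hy, h1, h2⟩
    · exact Or.inl ⟨⟨y, hcor y hy⟩, Subtype.ext hy, Subtype.ext h1, Subtype.ext h2⟩
    · exact Or.inr ⟨⟨y, hcor y hy⟩, Subtype.ext hy, Subtype.ext h1, Subtype.ext h2⟩


theorem lift_idem : ∀ (n : ℕ) {R : Type u₁} {B : Type u₂} [Ring R] [Ring B] (π : R →+* B)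
    (hπ : Function.Surjective π) (ε : Fin n → R)
    (hidem : ∀ i, ε i * ε i = ε i)
    (horth : ∀ i j, i ≠ j → ε i * ε j = 0)
    (hsum : ∑ i, ε i = 1)
    (hloc : ∀ i, IsLocalIdempotent (ε i))
    (b : B) (hb : b * b = b), ∃ P : R, P * P = P ∧ π P = b := by
  intro n
  induction n with
  | zero =>
    intro R B _ _ π hπ ε hidem horth hsum hloc b hb
    have h01 : (0 : R) = 1 := by simpa using hsum
    obtain ⟨a, ha⟩ := hπ b
    have ha0 : a = 0 := by rw [← mul_one a, ← h01, mul_zero]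
    refine ⟨0, by simp, ?_⟩
    rw [← ha, ha0]
  | succ n IH =>
    intro R B _ _ π hπ ε hidem horth hsum hloc b hb
    have he : ε 0 * ε 0 = ε 0 := hidem 0
    -- the key construction, assuming the corner unit is on the `a` side
    have key : ∀ (b : B), b * b = b → ∀ a : R, π a = b → IsCornerUnit (ε 0) (ε 0 * a * ε 0) →
        ∃ P : R, P * P = P ∧ π P = b := by
      clear hb b
      intro b hb a ha hcu
      set e := ε 0 with he_def
      obtain ⟨y, hy, hxy, hyx⟩ := hcu
      have hey : e * y = y := corner_mul_left he hy
      have hye : y * e = y := corner_mul_right he hy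
      -- p = y * a
      have hpe : y * a * e = e := by
        have h1 : y * (e * a * e) = y * a * e := by
          rw [← mul_assoc, ← mul_assoc, hye]
        rw [← h1, hyx]
      have hep : e * (y * a) = y * a := by rw [← mul_assoc, hey]
      have hyay : y * a * y = y := by
        calc y * a * y = y * a * (e * y) := by rw [hey]
          _ = (y * a * e) * y := by rw [← mul_assoc]
          _ = e * y := by rw [hpe]
          _ = y := hey
      have hp2 : (y * a) * (y * a) = y * a := by
        rw [← mul_assoc, hyay]
      -- Z
      set Z := (1 - y * a) * (a * (y * a)) with hZdef
      have hpZ : (y * a) * Z = 0 := by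
        rw [hZdef, ← mul_assoc]
        have : (y * a) * (1 - y * a) = 0 := by
          rw [mul_sub, mul_one, hp2, sub_self]
        rw [this, zero_mul]
      have hZp : Z * (y * a) = Z := by
        rw [hZdef, mul_assoc, mul_assoc, hp2]
      have hZZ : Z * Z = 0 := by
        calc Z * Z = (Z * (y * a)) * Z := by rw [hZp]
          _ = Z * ((y * a) * Z) := by rw [mul_assoc]
          _ = 0 := by rw [hpZ, mul_zero]
      -- P₁
      set P₁ := y * a + Z with hP₁def
      have hP₁ : P₁ * P₁ = P₁ := by
        rw [hP₁def, mul_add, add_mul, add_mul, hp2, hZp, hZZ, hpZ]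
        abel
      -- G
      set G := 1 - P₁ with hGdef
      have hG : G * G = G := by
        rw [hGdef, sub_mul, one_mul, mul_sub, mul_one, hP₁, sub_self, sub_zero]
      -- d
      set d := y * a - e with hddef
      have hde : d * e = 0 := by rw [hddef, sub_mul, hpe, he, sub_self]
      have hed : e * d = d := by rw [hddef, mul_sub, hep, he]
      have hdya : d * (y * a) = 0 := by
        rw [hddef, sub_mul, hp2, hep, sub_self]
      have hdd : d * d = 0 := by
        rw [hddef, mul_sub, hdya, hde, sub_zero]
      have h_inner : (1 - d) * e * (1 + d) = y * a := by
        have h1 : (1 - d) * e = e := by rw [sub_mul, one_mul, hde, sub_zero]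
        have h2 : e * (1 + d) = e + d := by rw [mul_add, mul_one, hed]
        rw [h1, h2, hddef, add_sub_cancel]
      have hZq : Z * (1 - y * a) = 0 := by
        rw [mul_sub, mul_one, hZp, sub_self]
      have hqZ : (1 - y * a) * Z = Z := by
        rw [sub_mul, one_mul, hpZ, sub_zero]
      have step1 : (1 + Z) * (1 - y * a) = 1 - y * a := by
        rw [add_mul, one_mul, hZq, add_zero]
      have step2 : (1 - y * a) * (1 - Z) = 1 - y * a - Z := by
        rw [mul_sub, mul_one, hqZ]
      have h_outer : (1 + Z) * (1 - y * a) * (1 - Z) = G := by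
        rw [step1, step2, hGdef, hP₁def, sub_add_eq_sub_sub]
      -- the units w, w'
      set w := (1 + Z) * (1 - d) with hwdef
      set w' := (1 + d) * (1 - Z) with hw'def
      have hd1 : (1 - d) * (1 + d) = 1 := by
        rw [mul_add, mul_one, sub_mul, one_mul, hdd, sub_zero, sub_add_cancel]
      have hd2 : (1 + d) * (1 - d) = 1 := by
        rw [mul_sub, mul_one, add_mul, one_mul, hdd, add_zero, add_sub_cancel_right]
      have hZ1 : (1 - Z) * (1 + Z) = 1 := by
        rw [mul_add, mul_one, sub_mul, one_mul, hZZ, sub_zero, sub_add_cancel]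
      have hZ2 : (1 + Z) * (1 - Z) = 1 := by
        rw [mul_sub, mul_one, add_mul, one_mul, hZZ, add_zero, add_sub_cancel_right]
      have hww' : w * w' = 1 := by
        rw [hwdef, hw'def, mul_assoc, ← mul_assoc (1 - d), hd1, one_mul, hZ2]
      have hw'w : w' * w = 1 := by
        rw [hwdef, hw'def, mul_assoc, ← mul_assoc (1 - Z), hZ1, one_mul, hd2]
      have hGw : w * (1 - e) * w' = G := by
        have hmid : (1 - d) * (1 - e) * (1 + d) = 1 - y * a := by
          have h3 : (1 - d) * (1 - e) = (1 - d) - (1 - d) * e := by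
            rw [mul_sub, mul_one]
          rw [h3, sub_mul, hd1, h_inner]
        calc w * (1 - e) * w' = (1 + Z) * ((1 - d) * (1 - e) * (1 + d)) * (1 - Z) := by
              rw [hwdef, hw'def]
              simp only [mul_assoc]
          _ = G := by rw [hmid, h_outer]
      -- B-side: q = π(y*a), c = b - b*q
      set q := π y * b with hqdef
      have hπya : π (y * a) = q := by rw [map_mul, ha, hqdef]
      have hqq : q * q = q := by
        rw [← hπya, ← map_mul, hp2]
      have hqb : q * b = q := by
        rw [hqdef, mul_assoc, hb]
      have hqbq : q * (b * q) = q := by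
        rw [← mul_assoc, hqb, hqq]
      have hπZ : π Z = b * q - q := by
        have : π Z = (1 - q) * (b * q) := by
          rw [hZdef, map_mul, map_sub, map_one, hπya, map_mul, ha, hπya]
        rw [this, sub_mul, one_mul, hqbq]
      have hπP₁ : π P₁ = b * q := by
        rw [hP₁def, map_add, hπya, hπZ, add_sub_cancel]
      set c := b - b * q with hcdef
      have h1 : b * (b * q) = b * q := by rw [← mul_assoc, hb]
      have h2 : (b * q) * b = b * q := by rw [mul_assoc, hqb]
      have h3 : (b * q) * (b * q) = b * q := by rw [mul_assoc, hqbq]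
      have hcc : c * c = c := by
        rw [hcdef, sub_mul, mul_sub, mul_sub, hb, h1, h2, h3]
        abel
      have hqc : q * c = 0 := by
        rw [hcdef, mul_sub, hqb, hqbq, sub_self]
      have hcb : c * b = c := by
        rw [hcdef, sub_mul, hb, h2]
      have hcq : c * q = 0 := by
        rw [hcdef, sub_mul, mul_assoc, hqq, sub_self]
      have hcbq : c * (b * q) = 0 := by
        rw [← mul_assoc, hcb, hcq]
      have hπG : π G = 1 - b * q := by
        rw [hGdef, map_sub, map_one, hπP₁]
      have hGcG : π G * c * π G = c := by
        rw [hπG, sub_mul, one_mul, mul_assoc, hqc, mul_zero, sub_zero,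
          mul_sub, mul_one, hcbq, sub_zero]
      -- corner rings
      have hπG2 : π G * π G = π G := by rw [← map_mul, hG]
      letI instR : Ring (Corner G) := Corner.ring hG
      letI instB : Ring (Corner (π G)) := Corner.ring hπG2
      have hmem : ∀ x : Corner G, π G * π x.1 * π G = π x.1 := fun x => by
        rw [← map_mul, ← map_mul, x.2]
      set π' : Corner G →+* Corner (π G) :=
        { toFun := fun x => ⟨π x.1, hmem x⟩
          map_one' := Subtype.ext rfl
          map_mul' := fun x y => Subtype.ext (map_mul π x.1 y.1)
          map_zero' := Subtype.ext (map_zero π)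
          map_add' := fun x y => Subtype.ext (map_add π x.1 y.1) } with hπ'def
      have hπ' : Function.Surjective π' := by
        intro z
        obtain ⟨r, hr⟩ := hπ z.1
        refine ⟨⟨G * r * G, ?_⟩, ?_⟩
        · rw [← mul_assoc, ← mul_assoc, hG, mul_assoc, hG]
        · refine Subtype.ext ?_
          show π (G * r * G) = z.1
          rw [map_mul, map_mul, hr]
          exact z.2
      -- the transported local system on the corner of G
      set η : Fin n → R := fun i => w * ε i.succ * w' with hηdef
      have hηidem : ∀ i, η i * η i = η i := fun i => by
        show (w * ε i.succ * w') * (w * ε i.succ * w') = w * ε i.succ * w'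
        rw [conj_mul_conj hw'w, hidem]
      have hηorth : ∀ i j, i ≠ j → η i * η j = 0 := fun i j hij => by
        show (w * ε i.succ * w') * (w * ε j.succ * w') = 0
        rw [conj_mul_conj hw'w, horth i.succ j.succ (fun h => hij (Fin.succ_injective _ h)),
          mul_zero, zero_mul]
      have hsum' : ∑ i : Fin n, ε i.succ = 1 - e := by
        rw [Fin.sum_univ_succ] at hsum
        rw [← he_def] at hsum
        exact eq_sub_of_add_eq' hsum
      have hηsum : ∑ i, η i = G := by
        show ∑ i : Fin n, w * ε i.succ * w' = G
        rw [← Finset.sum_mul, ← Finset.mul_sum, hsum', hGw]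
      have hηlocal : ∀ i, IsLocalIdempotent (η i) := fun i =>
        conj_local hww' hw'w (hloc i.succ)
      have hηG : ∀ i, G * η i * G = η i := fun i => by
        have h1 : (1 - e) * ε i.succ = ε i.succ := by
          rw [sub_mul, one_mul, he_def, horth 0 i.succ (Fin.succ_ne_zero i).symm, sub_zero]
        have h2 : ε i.succ * (1 - e) = ε i.succ := by
          rw [mul_sub, mul_one, he_def, horth i.succ 0 (Fin.succ_ne_zero i), sub_zero]
        show G * (w * ε i.succ * w') * G = w * ε i.succ * w'
        rw [← hGw, conj_mul_conj hw'w, conj_mul_conj hw'w, h1, h2]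
      set ε' : Fin n → Corner G := fun i => ⟨η i, hηG i⟩ with hε'def
      have hε'idem : ∀ i, ε' i * ε' i = ε' i := fun i => Subtype.ext (hηidem i)
      have hε'orth : ∀ i j, i ≠ j → ε' i * ε' j = 0 := fun i j h => Subtype.ext (hηorth i j h)
      have hε'sum : ∑ i, ε' i = 1 := by
        apply Subtype.ext
        have hval : (∑ i, ε' i).1 = ∑ i, η i := map_sum Corner.valHom ε' Finset.univ
        rw [hval, hηsum]
        rfl
      have hε'loc : ∀ i, IsLocalIdempotent (ε' i) := fun i =>
        local_corner_descent hG (hηG i) (hηlocal i)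
      obtain ⟨Q', hQ'2, hQ'π⟩ := IH π' hπ' ε' hε'idem hε'orth hε'sum hε'loc
        ⟨c, hGcG⟩ (Subtype.ext hcc)
      have hQ2 : Q'.1 * Q'.1 = Q'.1 := congrArg Subtype.val hQ'2
      have hQG : G * Q'.1 * G = Q'.1 := Q'.2
      have hπQ : π Q'.1 = c := congrArg Subtype.val hQ'π
      have hP₁G : P₁ * G = 0 := by rw [hGdef, mul_sub, mul_one, hP₁, sub_self]
      have hGP₁ : G * P₁ = 0 := by rw [hGdef, sub_mul, one_mul, hP₁, sub_self]
      have hP₁Q : P₁ * Q'.1 = 0 := by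
        rw [← hQG, ← mul_assoc, ← mul_assoc, hP₁G, zero_mul, zero_mul]
      have hQP₁ : Q'.1 * P₁ = 0 := by
        rw [← hQG, mul_assoc (G * Q'.1) G P₁, hGP₁, mul_zero]
      refine ⟨P₁ + Q'.1, ?_, ?_⟩
      · calc (P₁ + Q'.1) * (P₁ + Q'.1)
            = P₁ * P₁ + Q'.1 * P₁ + (P₁ * Q'.1 + Q'.1 * Q'.1) := by noncomm_ring
          _ = P₁ + Q'.1 := by rw [hP₁, hQP₁, hP₁Q, hQ2]; abel
      · rw [map_add, hπP₁, hπQ, hcdef]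
        abel
    -- now the dichotomy
    obtain ⟨a₀, ha₀⟩ := hπ b
    have hx : ε 0 * (ε 0 * a₀ * ε 0) * ε 0 = ε 0 * a₀ * ε 0 := by
      have h1 : ε 0 * (ε 0 * a₀ * ε 0) = ε 0 * a₀ * ε 0 := by
        rw [← mul_assoc, ← mul_assoc, he]
      rw [h1, mul_assoc, he]
    rcases (hloc 0).2 _ hx with hcu | hcu
    · exact key b hb a₀ ha₀ hcu
    · have hb' : (1 - b) * (1 - b) = 1 - b := by
        calc (1 - b) * (1 - b) = 1 - b - b + b * b := by noncomm_ring
          _ = 1 - b := by rw [hb]; abel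
      have ha' : π (1 - a₀) = 1 - b := by rw [map_sub, map_one, ha₀]
      have hcu' : IsCornerUnit (ε 0) (ε 0 * (1 - a₀) * ε 0) := by
        have h2 : ε 0 * (1 - a₀) * ε 0 = ε 0 - ε 0 * a₀ * ε 0 := by
          rw [mul_sub, mul_one, sub_mul, he]
        rw [h2]
        exact hcu
      obtain ⟨P', hP'2, hP'π⟩ := key (1 - b) hb' (1 - a₀) ha' hcu'
      refine ⟨1 - P', ?_, ?_⟩
      · calc (1 - P') * (1 - P') = 1 - P' - P' + P' * P' := by noncomm_ring
          _ = 1 - P' := by rw [hP'2]; abel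
      · rw [map_sub, map_one, hP'π, sub_sub_cancel]

theorem lift_of_semiperfect {R : Type u₁} {B : Type u₂} [Ring R] [Ring B]
    (hR : IsSemiperfectRing R) (π : R →+* B) (hπ : Function.Surjective π)
    (b : B) (hb : IsIdempotentElem b) : ∃ P : R, IsIdempotentElem P ∧ π P = b := by
  obtain ⟨n, ε, hidem, horth, hsum, hloc⟩ := hR
  exact lift_idem n π hπ ε hidem horth hsum hloc b hb

end SPLift

/-- (1) Idempotents lift along any surjective ring homomorphism out of a
semiperfect ring.  (2) Consequently, if `F : C ⥤ D` is an additive functor between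
idempotent-complete additive categories which is full at an object `L` with semiperfect
endomorphism ring and which reflects zero objects, then every direct summand of `F(L)` is
isomorphic to `F(X)` for some direct summand `X` of `L`. -/
theorem semiperfect_idempotent_lifting_and_summands
    {A : Type u} [Ring A] (hA : IsSemiperfectRing A)
    {B : Type u} [Ring B] (f : A →+* B) (hf : Function.Surjective f)
    (e : B) (he : IsIdempotentElem e)
    {C : Type u₁} [Category.{v₁} C] [Preadditive C] [IsIdempotentComplete C]
    {D : Type u₂} [Category.{v₂} D] [Preadditive D] [IsIdempotentComplete D]
    (F : C ⥤ D) [F.Additive] (L : C)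
    (hfull : Function.Surjective (fun g : L ⟶ L => F.map g))
    (hsemi : IsSemiperfectRing (End L))
    (hrefl : ∀ M : C, Limits.IsZero (F.obj M) → Limits.IsZero M) :
    (∃ ε : A, IsIdempotentElem ε ∧ f ε = e) ∧
    (∀ (Y : D) (ι : Y ⟶ F.obj L) (π : F.obj L ⟶ Y), ι ≫ π = 𝟙 Y →
      ∃ (X : C) (ι' : X ⟶ L) (π' : L ⟶ X), ι' ≫ π' = 𝟙 X ∧ Nonempty (F.obj X ≅ Y)) := by
  constructor
  · exact SPLift.lift_of_semiperfect hA f hf e he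
  · intro Y ι πY hsplit
    let φ : End L →+* End (F.obj L) :=
      { toFun := fun g => F.map g
        map_one' := F.map_id L
        map_mul' := fun g h => by
          show F.map (h ≫ g) = F.map h ≫ F.map g
          rw [F.map_comp]
        map_zero' := F.map_zero L L
        map_add' := fun g h => F.map_add }
    have hφs : Function.Surjective φ := hfull
    have hcomp : ι ≫ πY ≫ ι = ι := by
      rw [← Category.assoc, hsplit, Category.id_comp]
    have hbidem : @IsIdempotentElem (End (F.obj L)) _ (πY ≫ ι) := by
      show (πY ≫ ι) ≫ (πY ≫ ι) = πY ≫ ι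
      simp only [Category.assoc, hcomp]
    obtain ⟨εL, hεLidem, hεLmap⟩ := SPLift.lift_of_semiperfect hsemi φ hφs (πY ≫ ι) hbidem
    have hεLcomp : εL ≫ εL = εL := hεLidem
    obtain ⟨X, i, r, hir, hri⟩ := IsIdempotentComplete.idempotents_split L εL hεLcomp
    have hFε : F.map εL = πY ≫ ι := hεLmap
    refine ⟨X, i, r, hir, ⟨?_⟩⟩
    refine ⟨F.map i ≫ πY, ι ≫ F.map r, ?_, ?_⟩
    · have hkey : i ≫ εL ≫ r = 𝟙 X := by
        rw [← hri]
        simp only [Category.assoc]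
        rw [← Category.assoc i r, hir, Category.id_comp]
      calc (F.map i ≫ πY) ≫ ι ≫ F.map r
          = F.map i ≫ (πY ≫ ι) ≫ F.map r := by simp only [Category.assoc]
        _ = F.map i ≫ F.map εL ≫ F.map r := by rw [hFε]
        _ = F.map (i ≫ εL ≫ r) := by rw [F.map_comp, F.map_comp]
        _ = 𝟙 _ := by rw [hkey, F.map_id]
    · calc (ι ≫ F.map r) ≫ F.map i ≫ πY
          = ι ≫ F.map (r ≫ i) ≫ πY := by rw [F.map_comp]; simp only [Category.assoc]
        _ = ι ≫ (πY ≫ ι) ≫ πY := by rw [hri, hFε]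
        _ = 𝟙 Y := by
            simp only [Category.assoc]
            rw [hsplit, Category.comp_id, hsplit]
end
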